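/- Sawtooth pushforward identity: Let Q_Y be a Borel probability measure on ℝ with CDF G, let Δ > 0, and define f_Δ : ℝ → ℝ by f_Δ(x) = G^{-1}((x − iΔ)/Δ) for x ∈ (iΔ, (i+1)Δ], i ∈ ℤ, where G^{-1} is the quantile function. Let P̂ be any probability measure on ℝ whose density is constant on each interval (iΔ, (i+1)Δ] (i.e., the piecewise-uniform averaging of some density p). Then the pushforward of P̂ under f_Δ equals Q_Y exactly. -/

import Mathlib

/-!
On the cell `(iΔ, (i+1)Δ]` the sawtooth map is the quantile function `G⁻¹` composed with the
affine bijection of the cell onto `(0, 1]`, and `P̂` restricted to the cell is Lebesgue measure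
times the constant density `(1/Δ) ∫_cell p`. Since `G⁻¹ t ≤ y ↔ t ≤ G y` for `t ∈ (0, 1)`, the
quantile function pushes Lebesgue measure on `(0, 1]` forward to `Q`, so each cell contributes
`(∫_cell p) • Q`, and these masses add up to `∫ p = 1`.
-/

open MeasureTheory Set

noncomputable def cdfR (μ : Measure ℝ) (x : ℝ) : ℝ := (μ (Set.Iic x)).toReal

noncomputable def quantile (ν : Measure ℝ) (t : ℝ) : ℝ := sInf {y : ℝ | t ≤ cdfR ν y}

/-- The sawtooth simulator: on each interval `(iΔ, (i+1)Δ]` (where `i = ⌈x/Δ⌉ - 1`),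
map `x` to `G⁻¹((x - iΔ)/Δ)`. -/
noncomputable def sawtooth (ν : Measure ℝ) (Δ : ℝ) (x : ℝ) : ℝ :=
  quantile ν ((x - ((⌈x / Δ⌉ : ℝ) - 1) * Δ) / Δ)

/-- The piecewise average of a density `p` over the intervals `(iΔ, (i+1)Δ]`. -/
noncomputable def pieceAvg (p : ℝ → ℝ) (Δ : ℝ) (x : ℝ) : ℝ :=
  (1 / Δ) * ∫ t in Set.Ioc ((((⌈x / Δ⌉ : ℝ) - 1) * Δ)) (((⌈x / Δ⌉ : ℝ)) * Δ), p t

open Filter Topology ProbabilityTheory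

section Quantile

variable {ν : Measure ℝ} [IsProbabilityMeasure ν]

lemma cdfR_eq_cdf : cdfR ν = cdf ν := funext fun x => (cdf_eq_real ν x).symm

lemma bddBelow_le_cdfR {t : ℝ} (ht : 0 < t) : BddBelow {y | t ≤ cdfR ν y} := by
  obtain ⟨z, hz⟩ := ((tendsto_cdf_atBot ν).eventually_lt_const ht).exists
  refine ⟨z, fun w hw => le_of_not_ge fun hwz => ?_⟩
  rw [mem_ofPred_eq, cdfR_eq_cdf] at hw
  exact (hw.trans ((cdf ν).mono hwz)).not_gt hz

lemma nonempty_le_cdfR {t : ℝ} (ht : t < 1) : {y | t ≤ cdfR ν y}.Nonempty := by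
  obtain ⟨z, hz⟩ := ((tendsto_cdf_atTop ν).eventually_const_lt ht).exists
  exact ⟨z, by rw [mem_ofPred_eq, cdfR_eq_cdf]; exact hz.le⟩

lemma le_cdfR_quantile {t : ℝ} (ht : t ∈ Ioo 0 1) : t ≤ cdfR ν (quantile ν t) := by
  have hgt : ∀ z, quantile ν t < z → t ≤ cdfR ν z := fun z hz => by
    obtain ⟨w, hw, hwz⟩ := (csInf_lt_iff (bddBelow_le_cdfR ht.1) (nonempty_le_cdfR ht.2)).mp hz
    exact hw.trans (cdfR_eq_cdf (ν := ν) ▸ (cdf ν).mono hwz.le)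
  rw [cdfR_eq_cdf] at hgt ⊢
  exact ge_of_tendsto (((cdf ν).right_continuous _).mono Ioi_subset_Ici_self).tendsto
    (eventually_nhdsWithin_of_forall hgt)

lemma quantile_le_iff {t y : ℝ} (ht : t ∈ Ioo 0 1) : quantile ν t ≤ y ↔ t ≤ cdfR ν y := by
  refine ⟨fun h => (le_cdfR_quantile (ν := ν) ht).trans ?_,
    fun h => csInf_le (bddBelow_le_cdfR ht.1) h⟩
  rw [cdfR_eq_cdf (ν := ν)]
  exact (cdf ν).mono h

-- Off `(0, 1]` the defining set is `univ` or `∅`, whose `sInf` in `ℝ` is the junk value `0`.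
lemma quantile_of_notMem_Ioc {t : ℝ} (ht : t ∉ Ioc 0 1) : quantile ν t = 0 := by
  simp only [mem_Ioc, not_and, not_le] at ht
  rcases le_or_gt t 0 with h0 | h0
  · have : {y | t ≤ cdfR ν y} = univ := eq_univ_of_forall fun y => h0.trans ENNReal.toReal_nonneg
    rw [quantile, this]
    exact Real.sInf_of_not_bddBelow not_bddBelow_univ
  · have : {y | t ≤ cdfR ν y} = ∅ := by
      refine eq_empty_of_forall_notMem fun y (hy : t ≤ cdfR ν y) => ?_
      rw [cdfR_eq_cdf] at hy
      exact (cdf_le_one ν y).not_gt ((ht h0).trans_le hy)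
    rw [quantile, this, Real.sInf_empty]

lemma measurable_quantile : Measurable (quantile ν) := by
  refine measurable_of_Iic fun c => ?_
  -- A sublevel set is an interval on `(0, 1)`, at most a point at `1`, all or nothing elsewhere.
  have hpre : quantile ν ⁻¹' Iic c =
      (Iic (cdfR ν c) ∩ Ioo 0 1) ∪ (quantile ν ⁻¹' Iic c ∩ {1}) ∪ ({_t | 0 ≤ c} \ Ioc 0 1) := by
    ext t
    by_cases ht : t ∈ Ioo 0 1
    · simp [ht, quantile_le_iff ht, ht.1, ht.2.le, ht.2.ne]
    by_cases ht1 : t = 1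
    · simp [ht1]
    have ht' : t ∉ Ioc 0 1 := fun h => ht ⟨h.1, h.2.lt_of_ne ht1⟩
    simp [ht, ht1, ht', quantile_of_notMem_Ioc ht']
  rw [hpre]
  exact ((measurableSet_Iic.inter measurableSet_Ioo).union
    (subsingleton_singleton.anti inter_subset_right).measurableSet).union
    ((MeasurableSet.const _).diff measurableSet_Ioc)

lemma map_quantile_volume_Ioc : (volume.restrict (Ioc 0 1)).map (quantile ν) = ν := by
  refine Measure.ext_of_Iic _ _ fun y => ?_
  have hpre : quantile ν ⁻¹' Iic y ∩ Ioo 0 1 = Iic (cdfR ν y) ∩ Ioo 0 1 := by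
    ext t
    simp +contextual [and_congr_left_iff, quantile_le_iff]
  have hcdf : cdfR ν y ≤ 1 := cdfR_eq_cdf (ν := ν) ▸ cdf_le_one ν y
  rw [Measure.map_apply measurable_quantile measurableSet_Iic,
    Measure.restrict_congr_set Ioo_ae_eq_Ioc.symm,
    Measure.restrict_apply (measurable_quantile measurableSet_Iic), hpre,
    measure_congr ((ae_eq_refl _).inter Ioo_ae_eq_Ioc), Iic_inter_Ioc_of_le hcdf,
    Real.volume_Ioc, sub_zero, cdfR, ENNReal.ofReal_toReal (measure_ne_top ν _)]

end Quantile

def cell (Δ : ℝ) (i : ℤ) : Set ℝ := Ioc (i * Δ) ((i + 1) * Δ)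

section Cells

variable {Δ : ℝ}

lemma iUnion_cell (hΔ : 0 < Δ) : ⋃ i, cell Δ i = univ := by
  simpa [cell, zsmul_eq_mul] using iUnion_Ioc_zsmul hΔ

open Function in
lemma pairwise_disjoint_cell : Pairwise (Disjoint on cell Δ) := by
  unfold cell
  simpa [zsmul_eq_mul] using pairwise_disjoint_Ioc_zsmul Δ

lemma measurableSet_cell (i : ℤ) : MeasurableSet (cell Δ i) := measurableSet_Ioc

lemma ceil_div_eq_of_mem_cell (hΔ : 0 < Δ) {i : ℤ} {x : ℝ} (hx : x ∈ cell Δ i) :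
    ⌈x / Δ⌉ = i + 1 := by
  rw [Int.ceil_eq_iff, Int.cast_add, Int.cast_one, add_sub_cancel_right, lt_div_iff₀ hΔ,
    div_le_iff₀ hΔ]
  exact hx

lemma sawtooth_eq_of_mem_cell (ν : Measure ℝ) (hΔ : 0 < Δ) {i : ℤ} {x : ℝ}
    (hx : x ∈ cell Δ i) : sawtooth ν Δ x = quantile ν ((x - i * Δ) / Δ) := by
  rw [sawtooth, ceil_div_eq_of_mem_cell hΔ hx]
  push_cast
  ring_nf

lemma pieceAvg_eq_of_mem_cell (p : ℝ → ℝ) (hΔ : 0 < Δ) {i : ℤ} {x : ℝ} (hx : x ∈ cell Δ i) :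
    pieceAvg p Δ x = (1 / Δ) * ∫ t in cell Δ i, p t := by
  rw [pieceAvg, ceil_div_eq_of_mem_cell hΔ hx, cell]
  push_cast
  ring_nf

lemma measurable_sawtooth (ν : Measure ℝ) [IsProbabilityMeasure ν] :
    Measurable (sawtooth ν Δ) := by
  refine measurable_quantile.comp ?_
  have hceil : Measurable fun x : ℝ => (⌈x / Δ⌉ : ℝ) := by fun_prop
  fun_prop

lemma map_volume_sub_div (hΔ : 0 < Δ) (a : ℝ) :
    volume.map (fun x => (x - a) / Δ) = ENNReal.ofReal Δ • volume := by
  have : (fun x => (x - a) / Δ) = (Δ⁻¹ * ·) ∘ (· + -a) := by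
    ext x; simp [div_eq_inv_mul, sub_eq_add_neg]
  rw [this, ← Measure.map_map (by fun_prop) (by fun_prop), map_add_right_eq_self,
    Real.map_volume_mul_left (inv_ne_zero hΔ.ne'), inv_inv, abs_of_pos hΔ]

lemma preimage_sub_div_Ioc_zero_one (hΔ : 0 < Δ) (i : ℤ) :
    (fun x => (x - i * Δ) / Δ) ⁻¹' Ioc 0 1 = cell Δ i := by
  ext x
  simp only [mem_preimage, mem_Ioc, cell, div_pos_iff_of_pos_right hΔ, div_le_one hΔ]
  constructor <;> rintro ⟨h1, h2⟩ <;> constructor <;> linarith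

lemma map_volume_restrict_cell (hΔ : 0 < Δ) (i : ℤ) :
    (volume.restrict (cell Δ i)).map (fun x => (x - i * Δ) / Δ)
      = ENNReal.ofReal Δ • volume.restrict (Ioc 0 1) := by
  rw [← preimage_sub_div_Ioc_zero_one hΔ, ← Measure.restrict_map (by fun_prop) measurableSet_Ioc,
    map_volume_sub_div hΔ, Measure.restrict_smul]

lemma map_volume_restrict_cell_sawtooth (ν : Measure ℝ) [IsProbabilityMeasure ν] (hΔ : 0 < Δ)
    (i : ℤ) : (volume.restrict (cell Δ i)).map (sawtooth ν Δ) = ENNReal.ofReal Δ • ν := by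
  rw [Measure.map_congr (g := quantile ν ∘ fun x => (x - i * Δ) / Δ)
      (ae_restrict_of_forall_mem (measurableSet_cell i)
        fun x hx => sawtooth_eq_of_mem_cell ν hΔ hx),
    ← Measure.map_map measurable_quantile (by fun_prop), map_volume_restrict_cell hΔ,
    Measure.map_smul, map_quantile_volume_Ioc]

end Cells

section PieceAvg

variable {Δ : ℝ} {p : ℝ → ℝ}

lemma withDensity_pieceAvg_restrict_cell (hΔ : 0 < Δ) (i : ℤ) :
    (volume.withDensity fun x => ENNReal.ofReal (pieceAvg p Δ x)).restrict (cell Δ i)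
      = ENNReal.ofReal ((1 / Δ) * ∫ t in cell Δ i, p t) • volume.restrict (cell Δ i) := by
  rw [restrict_withDensity (measurableSet_cell i), ← withDensity_const]
  exact withDensity_congr_ae (ae_restrict_of_forall_mem (measurableSet_cell i)
    fun x hx => congrArg ENNReal.ofReal (pieceAvg_eq_of_mem_cell p hΔ hx))

lemma tsum_ofReal_integral_cell (hΔ : 0 < Δ) (hp0 : 0 ≤ᵐ[volume] p) (hp : Integrable p) :
    ∑' i, ENNReal.ofReal (∫ t in cell Δ i, p t) = ENNReal.ofReal (∫ x, p x) := by
  rw [ofReal_integral_eq_lintegral_ofReal hp hp0, ← setLIntegral_univ, ← iUnion_cell hΔ,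
    lintegral_iUnion measurableSet_cell pairwise_disjoint_cell]
  exact tsum_congr fun i =>
    ofReal_integral_eq_lintegral_ofReal hp.integrableOn (ae_restrict_of_ae hp0)

end PieceAvg

/-- Pushing the piecewise-uniform averaging `P̂` of any density through the sawtooth
map yields exactly the target distribution `Q`. -/
theorem sawtooth_pushforward_exact (Q : Measure ℝ) [IsProbabilityMeasure Q]
    (Δ : ℝ) (hΔ : 0 < Δ) (p : ℝ → ℝ) (hp0 : ∀ x, 0 ≤ p x) (hp1 : Integrable p)
    (hp2 : ∫ x, p x = 1)
    (Phat : Measure ℝ)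
    (hPhat : Phat = volume.withDensity (fun x => ENNReal.ofReal (pieceAvg p Δ x))) :
    Phat.map (sawtooth Q Δ) = Q := by
  have hsum : Phat = Measure.sum fun i => Phat.restrict (cell Δ i) := by
    rw [← Measure.restrict_iUnion pairwise_disjoint_cell measurableSet_cell, iUnion_cell hΔ,
      Measure.restrict_univ]
  have hcell (i : ℤ) : (Phat.restrict (cell Δ i)).map (sawtooth Q Δ)
      = ENNReal.ofReal (∫ t in cell Δ i, p t) • Q := by
    rw [hPhat, withDensity_pieceAvg_restrict_cell hΔ, Measure.map_smul,
      map_volume_restrict_cell_sawtooth Q hΔ, smul_smul, ← ENNReal.ofReal_mul' hΔ.le]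
    congr 2
    field_simp
  ext s hs
  rw [hsum, Measure.map_sum (measurable_sawtooth Q).aemeasurable, Measure.sum_apply _ hs]
  simp only [hcell, Measure.smul_apply, smul_eq_mul]
  rw [ENNReal.tsum_mul_right, tsum_ofReal_integral_cell hΔ (ae_of_all _ hp0) hp1, hp2,
    ENNReal.ofReal_one, one_mul]
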